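/- Let 𝒟 ⊆ 𝒞 be subcategories of 𝓑 satisfying condition (RCP), ℋ_𝒟 := CoCone(𝒟,𝒞), ℋ := CoCone(𝒞,𝒞), and let ℋ/𝒞 be the heart of (𝒞,𝒞^⊥¹). Suppose 0→Z→Y→f→X→0 is a short exact sequence with Y ∈ ℋ_𝒟, f a right ℋ_𝒟-approximation of X, and Z ∈ 𝒟^⊥¹. If X ∈ ℋ, then the image f̄ of f in the heart ℋ/𝒞 is an epimorphism. -/

import Mathlib

open CategoryTheory Category Limits ZeroObject

universe v u

namespace CotorsionPaper

variable {B : Type u} [Category.{v} B] [Abelian B]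

/-- `f, g` form a short exact sequence `0 → X → Y → Z → 0`. -/
def IsSES {X Y Z : B} (f : X ⟶ Y) (g : Y ⟶ Z) : Prop :=
  ∃ w : f ≫ g = 0, (ShortComplex.mk f g w).ShortExact

/-- `Ext¹(X, Y) = 0`: every short exact sequence `0 → Y → E → X → 0` splits. -/
def Ext1Zero (X Y : B) : Prop :=
  ∀ ⦃E : B⦄ (i : Y ⟶ E) (p : E ⟶ X), IsSES i p → ∃ s : X ⟶ E, s ≫ p = 𝟙 X

/-- `Ext²(X, Y) = 0`, via dimension shifting: `Ext¹(K, Y) = 0` for any syzygy `K` of `X`. -/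
def Ext2Zero (X Y : B) : Prop :=
  ∀ ⦃K P : B⦄ (i : K ⟶ P) (p : P ⟶ X), Projective P → IsSES i p → Ext1Zero K Y

/-- A (strictly) full additive subcategory: closed under isomorphisms,
contains a zero object and is closed under finite direct sums. -/
structure AddSubcat (S : Set B) : Prop where
  zero_mem : (0 : B) ∈ S
  iso_closed : ∀ ⦃X Y : B⦄, (X ≅ Y) → X ∈ S → Y ∈ S
  sum_closed : ∀ ⦃X Y : B⦄, X ∈ S → Y ∈ S → (X ⊞ Y) ∈ S

/-- `S` is closed under direct summands (retracts). -/
def ClosedUnderSummands (S : Set B) : Prop :=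
  ∀ ⦃X Y : B⦄ (r : X ⟶ Y) (s : Y ⟶ X), s ≫ r = 𝟙 Y → X ∈ S → Y ∈ S

/-- `S` is rigid: `Ext¹(X, Y) = 0` for all `X, Y ∈ S`. -/
def Rigid (S : Set B) : Prop :=
  ∀ ⦃X⦄, X ∈ S → ∀ ⦃Y⦄, Y ∈ S → Ext1Zero X Y

/-- `S^⊥¹`. -/
def rightPerp (S : Set B) : Set B := {Y | ∀ ⦃X⦄, X ∈ S → Ext1Zero X Y}

/-- `^⊥¹S`. -/
def leftPerp (S : Set B) : Set B := {X | ∀ ⦃Y⦄, Y ∈ S → Ext1Zero X Y}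

/-- `f : X ⟶ A` is a right `S`-approximation of `A`. -/
def IsRightApprox (S : Set B) {X A : B} (f : X ⟶ A) : Prop :=
  X ∈ S ∧ ∀ ⦃X' : B⦄, X' ∈ S → ∀ g : X' ⟶ A, ∃ h : X' ⟶ X, h ≫ f = g

def ContravariantlyFinite (S : Set B) : Prop :=
  ∀ A : B, ∃ (X : B) (f : X ⟶ A), IsRightApprox S f

/-- `f : A ⟶ X` is a left `S`-approximation of `A`. -/
def IsLeftApprox (S : Set B) {A X : B} (f : A ⟶ X) : Prop :=
  X ∈ S ∧ ∀ ⦃X' : B⦄, X' ∈ S → ∀ g : A ⟶ X', ∃ h : X ⟶ X', f ≫ h = g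

def CovariantlyFinite (S : Set B) : Prop :=
  ∀ A : B, ∃ (X : B) (f : A ⟶ X), IsLeftApprox S f

/-- `(U, V)` is a cotorsion pair. -/
structure CotorsionPair (U V : Set B) : Prop where
  summands_left : ClosedUnderSummands U
  summands_right : ClosedUnderSummands V
  ext : ∀ ⦃X⦄, X ∈ U → ∀ ⦃Y⦄, Y ∈ V → Ext1Zero X Y
  resol : ∀ X : B, ∃ (VX UX : B) (i : VX ⟶ UX) (p : UX ⟶ X),
    VX ∈ V ∧ UX ∈ U ∧ IsSES i p
  coresol : ∀ X : B, ∃ (VX UX : B) (i : X ⟶ VX) (p : VX ⟶ UX),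
    VX ∈ V ∧ UX ∈ U ∧ IsSES i p

/-- `CoCone(S, T)`. -/
def CoCone (S T : Set B) : Set B :=
  {X | ∃ (B' B'' : B) (i : X ⟶ B') (p : B' ⟶ B''), B' ∈ S ∧ B'' ∈ T ∧ IsSES i p}

/-- `Cone(S, T)`. -/
def Cone (S T : Set B) : Set B :=
  {X | ∃ (B' B'' : B) (i : B' ⟶ B'') (p : B'' ⟶ X), B' ∈ S ∧ B'' ∈ T ∧ IsSES i p}

/-- The subcategory `𝒫` of projective objects. -/
def projSet : Set B := {P | Projective P}

/-- The subcategory `ℐ` of injective objects. -/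
def injSet : Set B := {I | Injective I}

/-- `Ω𝒞`, the (first) syzygy of `𝒞`. -/
def Syz (C : Set B) : Set B := CoCone projSet C

/-- Condition (RCP): `𝒫 ⊆ 𝒞`, `𝒞` rigid, contravariantly finite,
closed under direct summands (and a full additive subcategory). -/
structure RCP (C : Set B) : Prop where
  add : AddSubcat C
  proj_mem : ∀ ⦃P : B⦄, Projective P → P ∈ C
  rigid : Rigid C
  contra : ContravariantlyFinite C
  summands : ClosedUnderSummands C

/-- `f` factors through an object of `S`. -/
def FactorsThru (S : Set B) {X Y : B} (f : X ⟶ Y) : Prop :=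
  ∃ (Z : B) (g : X ⟶ Z) (h : Z ⟶ Y), Z ∈ S ∧ g ≫ h = f

/-- The ideal of morphisms of the full subcategory on `H` factoring through an object of `S`. -/
def idealRel (H S : Set B) : HomRel (ObjectProperty.FullSubcategory (fun X : B => H X)) :=
  fun X Y f g => FactorsThru S (show X.obj ⟶ Y.obj from f.hom - g.hom)

/-- The ideal quotient `H/S`. -/
abbrev HeartCat (H S : Set B) := CategoryTheory.Quotient (idealRel H S)

/-- The quotient functor `H → H/S`. -/
abbrev heartQ (H S : Set B) : ObjectProperty.FullSubcategory (fun X : B => H X) ⥤ HeartCat H S :=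
  CategoryTheory.Quotient.functor _

/-- The zero morphism in the ideal quotient `H/S`. -/
def heartZero (H S : Set B) (X Y : HeartCat H S) : X ⟶ Y :=
  (heartQ H S).map (ObjectProperty.homMk (0 : X.as.obj ⟶ Y.as.obj))

/-- `κ` is a kernel of `φ` in the ideal quotient `H/S`. -/
structure IsKernelArrow {H S : Set B} {K X Y : HeartCat H S}
    (κ : K ⟶ X) (φ : X ⟶ Y) : Prop where
  w : κ ≫ φ = heartZero H S K Y
  lift : ∀ ⦃T : HeartCat H S⦄ (t : T ⟶ X), t ≫ φ = heartZero H S T Y →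
    ∃! u : T ⟶ K, u ≫ κ = t

/-- `π` is a cokernel of `φ` in the ideal quotient `H/S`. -/
structure IsCokernelArrow {H S : Set B} {X Y Q : HeartCat H S}
    (φ : X ⟶ Y) (π : Y ⟶ Q) : Prop where
  w : φ ≫ π = heartZero H S X Q
  desc : ∀ ⦃T : HeartCat H S⦄ (t : Y ⟶ T), φ ≫ t = heartZero H S X T →
    ∃! u : Q ⟶ T, π ≫ u = t

/-- The class of epimorphisms in `H/S` whose kernel object lies in `A`. -/
def epiClassWithKernelIn (H S A : Set B) : MorphismProperty (HeartCat H S) :=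
  fun X Y φ => Epi φ ∧ ∃ (K : HeartCat H S) (κ : K ⟶ X),
    K.as.obj ∈ A ∧ IsKernelArrow κ φ

/-- The class of monomorphisms in `H/S` whose cokernel object lies in `A`. -/
def monoClassWithCokernelIn (H S A : Set B) : MorphismProperty (HeartCat H S) :=
  fun X Y φ => Mono φ ∧ ∃ (Q : HeartCat H S) (π : Y ⟶ Q),
    Q.as.obj ∈ A ∧ IsCokernelArrow φ π

/-- The diagram `(⋄)` associated with a morphism `f : Y ⟶ X`. -/
structure DiamondDiagram {Y X : B} (f : Y ⟶ X) {OmX PX Z₁ IY SgY Z₂ : B}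
    (q : OmX ⟶ PX) (p : PX ⟶ X) (j : OmX ⟶ Z₁) (g : Z₁ ⟶ Y)
    (i : Y ⟶ IY) (c : IY ⟶ SgY) (h : X ⟶ Z₂) (e : Z₂ ⟶ SgY)
    (u : Z₁ ⟶ PX) (v : IY ⟶ Z₂) : Prop where
  projPX : Projective PX
  injIY : Injective IY
  ses_proj : IsSES q p
  ses_pullback : IsSES j g
  ses_inj : IsSES i c
  ses_pushout : IsSES h e
  comm₁ : j ≫ u = q
  comm₂ : u ≫ p = g ≫ f
  comm₃ : f ≫ h = i ≫ v
  comm₄ : v ≫ e = c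

/-- The class of morphisms `f : Y ⟶ X` admitting a diagram `(⋄)` with
`Z₁ ∈ ZCond` and `h` factoring through an object of `HCond`. -/
def Rclass (ZCond HCond : Set B) : MorphismProperty B :=
  fun Y X f => ∃ (OmX PX Z₁ IY SgY Z₂ : B) (q : OmX ⟶ PX) (p : PX ⟶ X)
    (j : OmX ⟶ Z₁) (g : Z₁ ⟶ Y) (i : Y ⟶ IY) (c : IY ⟶ SgY)
    (h : X ⟶ Z₂) (e : Z₂ ⟶ SgY) (u : Z₁ ⟶ PX) (v : IY ⟶ Z₂),
    DiamondDiagram f q p j g i c h e u v ∧ Z₁ ∈ ZCond ∧ FactorsThru HCond h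

/-- The class of morphisms `f : Y ⟶ X` admitting a diagram `(⋄)` with
`g` factoring through an object of `GCond` and `h` through an object of `HCond`. -/
def RtildeClass (GCond HCond : Set B) : MorphismProperty B :=
  fun Y X f => ∃ (OmX PX Z₁ IY SgY Z₂ : B) (q : OmX ⟶ PX) (p : PX ⟶ X)
    (j : OmX ⟶ Z₁) (g : Z₁ ⟶ Y) (i : Y ⟶ IY) (c : IY ⟶ SgY)
    (h : X ⟶ Z₂) (e : Z₂ ⟶ SgY) (u : Z₁ ⟶ PX) (v : IY ⟶ Z₂),
    DiamondDiagram f q p j g i c h e u v ∧ FactorsThru GCond g ∧ FactorsThru HCond h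

/-- The objects of the heart `ℋ` of a cotorsion pair `(U, V)`. -/
def HeartObjects (U V : Set B) : Set B :=
  {X | (∃ (VX UX : B) (i : VX ⟶ UX) (p : UX ⟶ X),
          IsSES i p ∧ VX ∈ V ∧ UX ∈ U ∩ V) ∧
       (∃ (VX UX : B) (i : X ⟶ VX) (p : VX ⟶ UX),
          IsSES i p ∧ VX ∈ U ∩ V ∧ UX ∈ U)}

end CotorsionPaper

/-!
Two morphisms `X ⟶ T` with the same composite with `f̄` differ by some `g` such that `f ≫ g`
factors through `𝒞`, so it suffices to show that `g` itself factors through `𝒞`. Write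
`0 → X → C₁ → C₂ → 0` with `Cᵢ ∈ 𝒞` and pull it back along an epimorphism `P ↠ C₁` from a projective. The
pullback `K` lies in `CoCone(𝒟, 𝒞)` through `0 → K → P → C₂ → 0`, so `K → X` factors through
the approximation `f`; the resulting map from `K` to an object `W ∈ 𝒞` through which `f ≫ g`
factors extends to `P` because `Ext¹(C₂, W) = 0`. A pullback square along an epimorphism is also
a pushout square, so `g` extends along `X → C₁`.
-/

namespace CotorsionPaper

variable {B : Type u} [Category.{v} B]

namespace FactorsThru

variable {S : Set B}

lemma comp_left {X Y W : B} (e : W ⟶ X) {f : X ⟶ Y} (hf : FactorsThru S f) :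
    FactorsThru S (e ≫ f) := by
  obtain ⟨Z, g, h, hZ, rfl⟩ := hf
  exact ⟨Z, e ≫ g, h, hZ, assoc e g h⟩

lemma comp_right {X Y W : B} {f : X ⟶ Y} (hf : FactorsThru S f) (e : Y ⟶ W) :
    FactorsThru S (f ≫ e) := by
  obtain ⟨Z, g, h, hZ, rfl⟩ := hf
  exact ⟨Z, g, h ≫ e, hZ, (assoc g h e).symm⟩

variable [Abelian B]

lemma zero (hS : AddSubcat S) (X Y : B) : FactorsThru S (0 : X ⟶ Y) :=
  ⟨0, 0, 0, hS.zero_mem, by simp⟩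

lemma neg {X Y : B} {f : X ⟶ Y} (hf : FactorsThru S f) : FactorsThru S (-f) := by
  obtain ⟨Z, g, h, hZ, rfl⟩ := hf
  exact ⟨Z, -g, h, hZ, Preadditive.neg_comp g h⟩

lemma add (hS : AddSubcat S) {X Y : B} {f f' : X ⟶ Y} (hf : FactorsThru S f)
    (hf' : FactorsThru S f') : FactorsThru S (f + f') := by
  obtain ⟨Z, g, h, hZ, rfl⟩ := hf
  obtain ⟨Z', g', h', hZ', rfl⟩ := hf'
  exact ⟨Z ⊞ Z', biprod.lift g g', biprod.desc h h', hS.sum_closed hZ hZ', biprod.lift_desc⟩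

end FactorsThru

variable [Abelian B]

lemma congruence_idealRel (H : Set B) {S : Set B} (hS : AddSubcat S) :
    Congruence (idealRel H S) where
  equivalence :=
    { refl _ := by simpa [idealRel] using FactorsThru.zero hS _ _
      symm {_ _} h := by simpa [idealRel] using h.neg
      trans {_ _ _} h h' := by simpa [idealRel] using h.add hS h' }
  comp_left := fun e _ _ h ↦ by
    simpa [idealRel, Preadditive.comp_sub] using h.comp_left e.hom
  comp_right := fun e h ↦ by
    simpa [idealRel, Preadditive.sub_comp] using h.comp_right e.hom

lemma epi_heartQ_map {H S : Set B} (hS : AddSubcat S)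
    {Y X : ObjectProperty.FullSubcategory (fun X : B => H X)} (f : Y ⟶ X)
    (hf : ∀ ⦃T : B⦄ (g : X.obj ⟶ T), FactorsThru S (f.hom ≫ g) → FactorsThru S g) :
    Epi ((heartQ H S).map f) := by
  have := congruence_idealRel H hS
  refine ⟨fun {T} g₁ g₂ h ↦ ?_⟩
  obtain ⟨a₁, rfl⟩ := (heartQ H S).map_surjective (X := X) (Y := T.as) g₁
  obtain ⟨a₂, rfl⟩ := (heartQ H S).map_surjective (X := X) (Y := T.as) g₂
  rw [← Functor.map_comp, ← Functor.map_comp, Quotient.functor_map_eq_iff] at h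
  refine CategoryTheory.Quotient.sound _ (hf _ ?_)
  simpa [idealRel, Preadditive.comp_sub] using h

lemma Ext1Zero.exists_comp_eq {K P Q W : B} {a : K ⟶ P} {p : P ⟶ Q}
    (hQW : Ext1Zero Q W) (hap : IsSES a p) (u : K ⟶ W) : ∃ θ : P ⟶ W, a ≫ θ = u := by
  obtain ⟨hap, hS⟩ := hap
  have := hS.mono_f
  have := hS.epi_g
  -- Pushing the sequence out along `u` gives `0 → W → pushout u a → Q → 0`, which splits.
  let π : pushout u a ⟶ Q := pushout.desc 0 p (by simp [hap])
  have hinl : pushout.inl u a ≫ π = 0 := pushout.inl_desc _ _ _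
  have hinr : pushout.inr u a ≫ π = p := pushout.inr_desc _ _ _
  have : Epi π := epi_of_epi_fac hinr
  have hπ : IsColimit (CokernelCofork.ofπ π hinl) := by
    refine CokernelCofork.IsColimit.ofπ' π _ fun t ht ↦ ?_
    obtain ⟨s, hs⟩ := CokernelCofork.IsColimit.desc' hS.exact.gIsCokernel (pushout.inr u a ≫ t)
      (by rw [← pushout.condition_assoc, ht, comp_zero])
    exact ⟨s, pushout.hom_ext (by rw [reassoc_of% hinl, zero_comp, ht])
      (by rw [reassoc_of% hinr]; exact hs)⟩
  have hexact := ShortComplex.exact_of_g_is_cokernel (ShortComplex.mk _ _ hinl) hπ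
  obtain ⟨s, hs⟩ := hQW _ π ⟨_, ⟨hexact⟩⟩
  let σ := ShortComplex.Splitting.ofExactOfSection _ hexact s hs inferInstance
  exact ⟨pushout.inr u a ≫ σ.r, by rw [← pushout.condition_assoc, σ.f_r, comp_id]⟩

lemma exists_desc_of_pullback_of_epi {X₂ X₃ X₄ T : B} (r : X₂ ⟶ X₄) (b : X₃ ⟶ X₄) [Epi b]
    (g : X₂ ⟶ T) (θ : X₃ ⟶ T) (w : pullback.fst r b ≫ g = pullback.snd r b ≫ θ) :
    ∃ τ : X₄ ⟶ T, r ≫ τ = g ∧ b ≫ τ = θ := by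
  have hθ : kernel.ι b ≫ θ = 0 := by
    rw [← pullback.lift_snd (f := r) (g := b) 0 (kernel.ι b) (by simp), assoc, ← w,
      pullback.lift_fst_assoc, zero_comp]
  obtain ⟨τ, hτ⟩ := CokernelCofork.IsColimit.desc'
    (Abelian.epiIsCokernelOfKernel _ (kernelIsKernel b)) θ hθ
  refine ⟨τ, ?_, hτ⟩
  rw [← cancel_epi (pullback.fst r b), pullback.condition_assoc]
  exact (congrArg _ hτ).trans w.symm

lemma IsSES.pullback_snd {X₁ X₂ X₃ P : B} {x : X₁ ⟶ X₂} {y : X₂ ⟶ X₃} (hxy : IsSES x y)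
    (l : P ⟶ X₂) [Epi l] : IsSES (pullback.snd x l) (l ≫ y) := by
  obtain ⟨hxy, hS⟩ := hxy
  have := hS.mono_f
  have := hS.epi_g
  have w : pullback.snd x l ≫ l ≫ y = 0 := by rw [← pullback.condition_assoc, hxy, comp_zero]
  refine ⟨w, ⟨ShortComplex.exact_of_f_is_kernel _ (KernelFork.IsLimit.ofι' _ w fun z hz ↦
    ⟨pullback.lift (hS.exact.lift (z ≫ l) (by simpa using hz)) z (hS.exact.lift_f _ _),
      pullback.lift_snd _ _ _⟩)⟩⟩

lemma factorsThru_of_factorsThru_comp [EnoughProjectives B] {C D : Set B} (hC : Rigid C)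
    (hD : ∀ ⦃P : B⦄, Projective P → P ∈ D) {Y X T : B} {f : Y ⟶ X}
    (hf : IsRightApprox (CoCone D C) f) (hX : X ∈ CoCone C C) {g : X ⟶ T}
    (hfg : FactorsThru C (f ≫ g)) : FactorsThru C g := by
  obtain ⟨C₁, C₂, x, y, hC₁, hC₂, hxy⟩ := hX
  have hK := hxy.pullback_snd (Projective.π C₁)
  obtain ⟨ν, hν⟩ := hf.2 ⟨_, _, _, _, hD inferInstance, hC₂, hK⟩ (pullback.fst _ _)
  obtain ⟨W, α, β, hW, hαβ⟩ := hfg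
  obtain ⟨θ, hθ⟩ := (hC hC₂ hW).exists_comp_eq hK (ν ≫ α)
  obtain ⟨τ, hτ, -⟩ := exists_desc_of_pullback_of_epi x _ g (θ ≫ β) (by
    rw [reassoc_of% hθ, hαβ, reassoc_of% hν])
  exact ⟨C₁, x, τ, hC₁, hτ⟩

theorem statement_5_general {B : Type u} [Category.{v} B] [Abelian B]
    [EnoughProjectives B]
    (C D : Set B) (hC : RCP C) (hD : RCP D)
    {Y X : B} (f : Y ⟶ X)
    (happrox : IsRightApprox (CoCone D C) f)
    (hX : X ∈ CoCone C C) (hY' : Y ∈ CoCone C C) :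
    Epi ((heartQ (CoCone C C) C).map (X := ⟨Y, hY'⟩) (Y := ⟨X, hX⟩) (ObjectProperty.homMk f)) :=
  epi_heartQ_map hC.add _ fun _ _ ↦
    factorsThru_of_factorsThru_comp hC.rigid hD.proj_mem happrox hX

/-- a right `ℋ_𝒟`-approximation of an object of `ℋ` with kernel in
`𝒟^⊥¹` becomes an epimorphism in the heart. -/
theorem statement_5 {B : Type u} [Category.{v} B] [Abelian B]
    [EnoughProjectives B] [EnoughInjectives B]
    (C D : Set B) (hC : RCP C) (hD : RCP D) (hDC : D ⊆ C)
    {Z Y X : B} (i : Z ⟶ Y) (f : Y ⟶ X)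
    (hses : IsSES i f) (hY : Y ∈ CoCone D C)
    (happrox : IsRightApprox (CoCone D C) f) (hZ : Z ∈ rightPerp D)
    (hX : X ∈ CoCone C C) (hY' : Y ∈ CoCone C C) :
    Epi ((heartQ (CoCone C C) C).map (X := ⟨Y, hY'⟩) (Y := ⟨X, hX⟩) (ObjectProperty.homMk f)) :=
  statement_5_general C D hC hD f happrox hX hY'

end CotorsionPaper
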